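/- Validity of the Laporte–Louveaux integer optimality cut across all binary first-stage decisions (the integer-cut part of Theorem 1): let Q be a real-valued function on ℝ^m and L ∈ ℝ a constant with L ≤ Q(z) for every binary vector z ∈ ℝ^m. Let ẑ ∈ ℝ^m be a binary vector and S = {i : ẑ_i = 1}. Then for every binary vector z ∈ ℝ^m, Q(z) ≥ (Q(ẑ) − L)·(Σ_{i∈S} z_i − Σ_{i∉S} z_i − |S| + 1) + L; that is, the integer optimality cut θ ≥ (Q(ẑ) − L)·(Σ_{i∈S} z_i − Σ_{i∉S} z_i − |S| + 1) + L generated at ẑ is satisfied by the pair (z, Q(z)) for every binary z. -/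
import Mathlib


open BigOperators

/-- Validity of the Laporte–Louveaux integer optimality cut across all binary
first-stage decisions: if `L ≤ Q z` for every binary `z`, and `zhat` is binary with
`S = {i : zhat i = 1}`, then for every binary `z`,
`Q z ≥ (Q zhat − L) (∑_{i∈S} z i − ∑_{i∉S} z i − |S| + 1) + L`. -/
theorem integer_optimality_cut_valid
    {m : ℕ} (Q : (Fin m → ℝ) → ℝ) (L : ℝ)
    (hL : ∀ z : Fin m → ℝ, (∀ i, z i = 0 ∨ z i = 1) → L ≤ Q z)
    (zhat : Fin m → ℝ) (hzhat : ∀ i, zhat i = 0 ∨ zhat i = 1) :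
    ∀ z : Fin m → ℝ, (∀ i, z i = 0 ∨ z i = 1) →
      Q z ≥ (Q zhat - L) *
          (∑ i ∈ Finset.univ.filter (fun i => zhat i = 1), z i
            - ∑ i ∈ (Finset.univ.filter (fun i => zhat i = 1))ᶜ, z i
            - ((Finset.univ.filter (fun i => zhat i = 1)).card : ℝ) + 1) + L := by
  intro z hz
  set S := Finset.univ.filter (fun i => zhat i = 1) with hS
  by_cases hzz : z = zhat
  · subst hzz
    have h1 : ∑ i ∈ S, z i = (S.card : ℝ) := by
      rw [Finset.card_eq_sum_ones, Nat.cast_sum]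
      apply Finset.sum_congr rfl
      intro i hi
      simp only [hS, Finset.mem_filter] at hi
      simp [hi.2]
    have h2 : ∑ i ∈ Sᶜ, z i = 0 := by
      apply Finset.sum_eq_zero
      intro i hi
      simp only [hS, Finset.mem_compl, Finset.mem_filter, Finset.mem_univ, true_and] at hi
      rcases hz i with h | h
      · exact h
      · exact absurd h hi
    rw [h1, h2]
    ring_nf
    simp
  · -- z ≠ zhat : the expression is ≤ 0
    obtain ⟨j, hj⟩ : ∃ j, z j ≠ zhat j := by
      by_contra h
      push_neg at h
      exact hzz (funext h)
    have hQL : 0 ≤ Q zhat - L := sub_nonneg.mpr (hL zhat hzhat)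
    have hE : (∑ i ∈ S, z i - ∑ i ∈ Sᶜ, z i - (S.card : ℝ) + 1) ≤ 0 := by
      have hnonneg : ∀ i, (0:ℝ) ≤ z i := by
        intro i; rcases hz i with h | h <;> simp [h]
      have hle1 : ∀ i, z i ≤ 1 := by
        intro i; rcases hz i with h | h <;> simp [h]
      by_cases hjS : j ∈ S
      · -- zhat j = 1, so z j = 0, so ∑_S z ≤ |S| - 1
        have hzhatj : zhat j = 1 := by
          simp only [hS, Finset.mem_filter] at hjS; exact hjS.2
        have hzj : z j = 0 := by
          rcases hz j with h | h
          · exact h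
          · exact absurd (h.trans hzhatj.symm) hj
        have hsum : ∑ i ∈ S, z i ≤ (S.card : ℝ) - 1 := by
          rw [← Finset.sum_erase_add S z hjS, hzj, add_zero]
          calc ∑ i ∈ S.erase j, z i ≤ ∑ i ∈ S.erase j, (1:ℝ) :=
                Finset.sum_le_sum (fun i _ => hle1 i)
            _ = ((S.erase j).card : ℝ) := by simp
            _ = (S.card : ℝ) - 1 := by
                rw [Finset.card_erase_of_mem hjS]
                have : 1 ≤ S.card := Finset.card_pos.mpr ⟨j, hjS⟩
                push_cast [this]
                ring
        have hsc : 0 ≤ ∑ i ∈ Sᶜ, z i := Finset.sum_nonneg (fun i _ => hnonneg i)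
        linarith
      · -- zhat j ≠ 1, so zhat j = 0, z j = 1, so ∑_{Sᶜ} z ≥ 1
        have hjSc : j ∈ Sᶜ := Finset.mem_compl.mpr hjS
        have hzhatj : zhat j = 0 := by
          rcases hzhat j with h | h
          · exact h
          · exact absurd (by simp [hS, h]) hjS
        have hzj : z j = 1 := by
          rcases hz j with h | h
          · exact absurd (h.trans hzhatj.symm) hj
          · exact h
        have hsc : (1:ℝ) ≤ ∑ i ∈ Sᶜ, z i := by
          rw [← Finset.sum_erase_add Sᶜ z hjSc, hzj]
          have : 0 ≤ ∑ i ∈ Sᶜ.erase j, z i := Finset.sum_nonneg (fun i _ => hnonneg i)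
          linarith
        have hsum : ∑ i ∈ S, z i ≤ (S.card : ℝ) := by
          calc ∑ i ∈ S, z i ≤ ∑ i ∈ S, (1:ℝ) := Finset.sum_le_sum (fun i _ => hle1 i)
            _ = (S.card : ℝ) := by simp
        linarith
    have : (Q zhat - L) * (∑ i ∈ S, z i - ∑ i ∈ Sᶜ, z i - (S.card : ℝ) + 1) ≤ 0 :=
      mul_nonpos_of_nonneg_of_nonpos hQL hE
    have hLz := hL z hz
    linarith
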